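/- For every integer n ≥ 2, the graph R_n has diameter exactly 2n−1; in fact dist(c_0, c_n) = 2n−1. -/

import Mathlib

/-!
Give `c_j` level `2j`, `a_{i+1}` and `b_{i+1}` level `2i+1`, and the pendant vertex `c_{m+1}`
level `2m+1`. Levels change by at most one along an edge, so `d(c_0,c_{m+1}) ≥ 2m+1`.
Conversely every vertex `u` lies on a walk of length `2m+1` from `c_0` to `c_{m+1}`, so
`d(c_0,u) + d(u,c_{m+1}) ≤ 2m+1`; adding this for `u` and `v` and going through whichever of
`c_0`, `c_{m+1}` is closer bounds `d(u,v)` by `2m+1`.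
-/

open SimpleGraph

/-- Vertices of the graph `R (m+1)`: `A i`, `B i` are `a_{i+1}`, `b_{i+1}` for `i : Fin m`,
and `C j` is `c_j` for `j : Fin (m+2)`.  (`RV m` carries the vertices of `R_{m+1}`,
which is `Q_m` together with the extra vertex `c_{m+1}`.) -/
inductive RV (m : ℕ) where
  | A : Fin m → RV m
  | B : Fin m → RV m
  | C : Fin (m + 2) → RV m
deriving DecidableEq

/-- The graph `R_{m+1}`: the graph `Q_m` (edges `c_{i-1}a_i`, `c_i a_i`, `c_{i-1}b_i`,
`c_i b_i`, `a_i b_i` for `1 ≤ i ≤ m`) together with a new vertex `c_{m+1}` adjacent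
only to `c_m`. -/
def Rgraph (m : ℕ) : SimpleGraph (RV m) :=
  SimpleGraph.fromRel (fun x y =>
    match x, y with
    | .A i, .B j => i.val = j.val
    | .A i, .C j => j.val = i.val ∨ j.val = i.val + 1
    | .B i, .C j => j.val = i.val ∨ j.val = i.val + 1
    | .C i, .C j => i.val = m ∧ j.val = m + 1
    | _, _ => False)

namespace SimpleGraph

variable {V : Type*} {G : SimpleGraph V}

lemma Walk.le_add_length_of_adj_le {f : V → ℕ} (hf : ∀ x y, G.Adj x y → f y ≤ f x + 1)
    {x y : V} (p : G.Walk x y) : f y ≤ f x + p.length := by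
  induction p with
  | nil => simp
  | cons h _ ih => have := hf _ _ h; simp only [Walk.length_cons]; omega

lemma sub_le_edist_of_adj_le {f : V → ℕ} (hf : ∀ x y, G.Adj x y → f y ≤ f x + 1)
    (x y : V) :
    ((f y - f x : ℕ) : ℕ∞) ≤ G.edist x y := by
  refine le_sInf ?_
  rintro _ ⟨p, rfl⟩
  have := p.le_add_length_of_adj_le hf
  exact Nat.cast_le.mpr (by omega)

lemma ediam_le_of_forall_edist_add_edist_le {s t : V} {d : ℕ}
    (h : ∀ u, G.edist s u + G.edist u t ≤ d) : G.ediam ≤ d := by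
  refine ediam_le_of_edist_le fun u v => ?_
  by_contra! hlt
  have hs : (d : ℕ∞) + 1 ≤ G.edist u s + G.edist s v :=
    Order.add_one_le_of_lt (hlt.trans_le G.edist_triangle)
  have ht : (d : ℕ∞) + 1 ≤ G.edist u t + G.edist t v :=
    Order.add_one_le_of_lt (hlt.trans_le G.edist_triangle)
  have hsum : G.edist u s + G.edist s v + (G.edist u t + G.edist t v) ≤ d + d := by
    calc _ = (G.edist s u + G.edist u t) + (G.edist s v + G.edist v t) := by
            rw [edist_comm (u := u), edist_comm (u := t)]; ring
      _ ≤ d + d := add_le_add (h u) (h v)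
  have hcontra := (add_le_add hs ht).trans hsum
  norm_cast at hcontra
  omega

theorem ediam_eq_and_edist_eq_of_adj_le {s t : V} {d : ℕ} (f : V → ℕ)
    (hf : ∀ x y, G.Adj x y → f y ≤ f x + 1) (hs : f s = 0) (ht : f t = d)
    (h : ∀ u, G.edist s u + G.edist u t ≤ d) : G.ediam = d ∧ G.edist s t = d := by
  have hdiam := ediam_le_of_forall_edist_add_edist_le h
  have hdist : (d : ℕ∞) ≤ G.edist s t := by simpa [hs, ht] using sub_le_edist_of_adj_le hf s t
  exact ⟨le_antisymm hdiam (hdist.trans edist_le_ediam),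
    le_antisymm (edist_le_ediam.trans hdiam) hdist⟩

end SimpleGraph

namespace Rgraph

variable {m : ℕ}

def level : RV m → ℕ
  | .A i | .B i => 2 * i + 1
  | .C j => min (2 * j) (2 * m + 1)

lemma level_le_succ_of_adj {x y : RV m} (h : (Rgraph m).Adj x y) : level y ≤ level x + 1 := by
  rcases x with i | i | j <;> rcases y with i' | i' | j' <;>
    simp [Rgraph, level] at h ⊢ <;> omega

lemma edist_C_le_two_mul {j k : ℕ} (hjk : j ≤ k) (hk : k ≤ m) :
    (Rgraph m).edist (.C ⟨j, by omega⟩) (.C ⟨k, by omega⟩) ≤ (2 * (k - j) : ℕ) := by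
  induction k, hjk using Nat.le_induction with
  | base => simp
  | succ k hjk ih =>
    have hA : ∀ l : Fin (m + 2), l.val = k ∨ l.val = k + 1 →
        (Rgraph m).edist (.A ⟨k, by omega⟩) (.C l) = 1 := fun l hl =>
      edist_eq_one_iff_adj.mpr (by simpa [Rgraph] using hl)
    have hC : (Rgraph m).edist (.C ⟨k, by omega⟩) (.A ⟨k, by omega⟩) = 1 :=
      SimpleGraph.edist_comm.trans (hA _ (.inl rfl))
    calc (Rgraph m).edist (.C ⟨j, by omega⟩) (.C ⟨k + 1, by omega⟩)
        ≤ (Rgraph m).edist (.C ⟨j, by omega⟩) (.C ⟨k, by omega⟩)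
          + (Rgraph m).edist (.C ⟨k, by omega⟩) (.A ⟨k, by omega⟩)
          + (Rgraph m).edist (.A ⟨k, by omega⟩) (.C ⟨k + 1, by omega⟩) :=
          SimpleGraph.edist_triangle.trans (by gcongr; exact SimpleGraph.edist_triangle)
      _ ≤ (2 * (k - j) : ℕ) + 1 + 1 := by
          rw [hC, hA _ (.inr rfl)]
          gcongr; exact ih (by omega)
      _ = (2 * (k + 1 - j) : ℕ) := by norm_cast; omega

lemma edist_C_last_le {j : ℕ} (hj : j ≤ m) :
    (Rgraph m).edist (.C ⟨j, by omega⟩) (.C (Fin.last (m + 1))) ≤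
      (2 * (m - j) + 1 : ℕ) := by
  have hlast : (Rgraph m).edist (.C ⟨m, by omega⟩) (.C (Fin.last (m + 1))) = 1 :=
    edist_eq_one_iff_adj.mpr (by simp [Rgraph, Fin.ext_iff])
  calc _ ≤ _ := SimpleGraph.edist_triangle
    _ ≤ (2 * (m - j) : ℕ) + 1 := by rw [hlast]; gcongr; exact edist_C_le_two_mul hj le_rfl
    _ = _ := by norm_cast

lemma edist_add_edist_le_of_adj {v : RV m} {i : ℕ} (hi : i < m)
    (h₀ : (Rgraph m).Adj (.C ⟨i, by omega⟩) v)
    (h₁ : (Rgraph m).Adj v (.C ⟨i + 1, by omega⟩)) :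
    (Rgraph m).edist (.C 0) v + (Rgraph m).edist v (.C (Fin.last (m + 1))) ≤
      (2 * m + 1 : ℕ) := by
  have hfrom : (Rgraph m).edist (.C 0) v ≤ (2 * i : ℕ) + 1 := by
    rw [← edist_eq_one_iff_adj.mpr h₀]
    exact SimpleGraph.edist_triangle.trans
      (by gcongr; exact edist_C_le_two_mul (Nat.zero_le i) hi.le)
  have hto : (Rgraph m).edist v (.C (Fin.last (m + 1))) ≤ 1 + (2 * (m - (i + 1)) + 1 : ℕ) := by
    rw [← edist_eq_one_iff_adj.mpr h₁]
    exact SimpleGraph.edist_triangle.trans (by gcongr; exact edist_C_last_le hi)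
  exact (add_le_add hfrom hto).trans (by norm_cast; omega)

lemma edist_add_edist_le (u : RV m) :
    (Rgraph m).edist (.C 0) u + (Rgraph m).edist u (.C (Fin.last (m + 1))) ≤
      (2 * m + 1 : ℕ) := by
  rcases u with i | i | ⟨j, hj⟩
  · exact edist_add_edist_le_of_adj i.isLt (by simp [Rgraph]) (by simp [Rgraph])
  · exact edist_add_edist_le_of_adj i.isLt (by simp [Rgraph]) (by simp [Rgraph])
  · obtain hj | rfl : j ≤ m ∨ j = m + 1 := by omega
    · exact (add_le_add (edist_C_le_two_mul (Nat.zero_le j) hj) (edist_C_last_le hj)).trans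
        (by norm_cast; omega)
    · rw [show (⟨m + 1, hj⟩ : Fin (m + 2)) = Fin.last (m + 1) from rfl, edist_self, add_zero]
      simpa using edist_C_last_le (m := m) (Nat.zero_le m)

theorem ediam_eq_and_edist_eq :
    (Rgraph m).ediam = (2 * m + 1 : ℕ) ∧
      (Rgraph m).edist (.C 0) (.C (Fin.last (m + 1))) = (2 * m + 1 : ℕ) :=
  ediam_eq_and_edist_eq_of_adj_le level (fun _ _ => level_le_succ_of_adj) (by simp [level])
    (by simp [level]) edist_add_edist_le

end Rgraph

/-- For `n ≥ 2`, the graph `R n` has diameter `2n - 1`; in fact `dist(c_0, c_n) = 2n - 1`.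
Here `R n` is `Rgraph (n-1)` and `c_n` is its last `C`-vertex. -/
theorem stmt5 (n : ℕ) (hn : 2 ≤ n) :
    (Rgraph (n - 1)).diam = 2 * n - 1 ∧
    (Rgraph (n - 1)).dist (RV.C 0) (RV.C (Fin.last (n - 1 + 1))) = 2 * n - 1 := by
  obtain ⟨m, rfl⟩ : ∃ m, n = m + 1 := ⟨n - 1, by omega⟩
  obtain ⟨hdiam, hdist⟩ := Rgraph.ediam_eq_and_edist_eq (m := m)
  rw [show 2 * (m + 1) - 1 = 2 * m + 1 by omega]
  exact ⟨by simp [SimpleGraph.diam, hdiam], by simp [SimpleGraph.dist, hdist]⟩
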